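/- The qubit amplitude damping channel A_{y,0} is anti-degradable whenever y ≥ 1/2: there exists a CPTP map A from the environment output to the channel output such that A ∘ A_{y,0}^c = A_{y,0}. -/

import Mathlib

open Matrix BigOperators Polynomial
open scoped ComplexOrder

noncomputable section

namespace QI

/-- Von Neumann entropy (base 2) of a Hermitian matrix, via its eigenvalues. -/
def entropy {n : Type*} [Fintype n] [DecidableEq n] (ρ : Matrix n n ℂ) : ℝ :=
  if h : ρ.IsHermitian then (∑ i, Real.negMulLog (h.eigenvalues i)) / Real.log 2 else 0

/-- A density operator: positive semidefinite with unit trace. -/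
def IsDensity {n : Type*} [Fintype n] [DecidableEq n] (ρ : Matrix n n ℂ) : Prop :=
  ρ.PosSemidef ∧ ρ.trace = 1

/-- Partial trace over the first tensor factor. -/
def ptraceA {a b : Type*} [Fintype a] (ρ : Matrix (a × b) (a × b) ℂ) : Matrix b b ℂ :=
  fun i j => ∑ k, ρ (k, i) (k, j)

/-- Partial trace over the second tensor factor. -/
def ptraceB {a b : Type*} [Fintype b] (ρ : Matrix (a × b) (a × b) ℂ) : Matrix a a ℂ :=
  fun i j => ∑ k, ρ (i, k) (j, k)

/-- Coherent information I(A⟩B) = H(ρ_B) − H(ρ_{AB}). -/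
def cohInfo {a b : Type*} [Fintype a] [DecidableEq a] [Fintype b] [DecidableEq b]
    (ρ : Matrix (a × b) (a × b) ℂ) : ℝ :=
  entropy (ptraceA ρ) - entropy ρ

/-- Choi matrix of a map on matrices. -/
def choi {a b : Type*} [Fintype a] [DecidableEq a]
    (Λ : Matrix a a ℂ → Matrix b b ℂ) : Matrix (a × b) (a × b) ℂ :=
  fun p q => Λ (Matrix.single p.1 q.1 1) p.2 q.2

/-- CPTP: linear, completely positive (PSD Choi matrix), and trace preserving. -/
def IsCPTP {a b : Type*} [Fintype a] [DecidableEq a] [Fintype b] [DecidableEq b]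
    (Λ : Matrix a a ℂ → Matrix b b ℂ) : Prop :=
  IsLinearMap ℂ Λ ∧ (choi Λ).PosSemidef ∧ ∀ ρ, (Λ ρ).trace = ρ.trace

/-- Output channel ρ ↦ Tr_E (V ρ V†) of a Stinespring isometry V : A → B ⊗ E. -/
def chOut {a b e : Type*} [Fintype a] [Fintype b] [Fintype e]
    (V : Matrix (b × e) a ℂ) (ρ : Matrix a a ℂ) : Matrix b b ℂ :=
  ptraceB (V * ρ * Vᴴ)

/-- Complementary channel ρ ↦ Tr_B (V ρ V†). -/
def chEnv {a b e : Type*} [Fintype a] [Fintype b] [Fintype e]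
    (V : Matrix (b × e) a ℂ) (ρ : Matrix a a ℂ) : Matrix e e ℂ :=
  ptraceA (V * ρ * Vᴴ)

/-- Extension id_A ⊗ Λ of a map acting on the second factor. -/
def extL {a b b' : Type*} (Λ : Matrix b b ℂ → Matrix b' b' ℂ)
    (ρ : Matrix (a × b) (a × b) ℂ) : Matrix (a × b') (a × b') ℂ :=
  fun p q => Λ (fun i j => ρ (p.1, i) (q.1, j)) p.2 q.2

/-- Extension F ⊗ id of a map acting on the first factor. -/
def extF {a b m : Type*} (F : Matrix a a ℂ → Matrix b b ℂ)
    (X : Matrix (a × m) (a × m) ℂ) : Matrix (b × m) (b × m) ℂ :=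
  fun p q => F (fun i j => X (i, p.2) (j, q.2)) p.1 q.1

/-- Trace norm: the sum of singular values. -/
def traceNorm {n : Type*} [Fintype n] [DecidableEq n] (X : Matrix n n ℂ) : ℝ :=
  ∑ i, Real.sqrt ((Matrix.posSemidef_conjTranspose_mul_self X).1.eigenvalues i)

/-- Diamond norm of a map on matrices. -/
def dnorm {a b : Type*} [Fintype a] [DecidableEq a] [Fintype b] [DecidableEq b]
    (F : Matrix a a ℂ → Matrix b b ℂ) : ℝ :=
  ⨆ k : ℕ, ⨆ X : {X : Matrix (a × Fin (k+1)) (a × Fin (k+1)) ℂ // traceNorm X ≤ 1},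
    traceNorm (extF F X.1)


/-- Stinespring isometry of the qubit amplitude damping channel:
|0⟩ ↦ |0⟩|0⟩, |1⟩ ↦ √(1−y)|1⟩|0⟩ + √y|0⟩|1⟩. -/
def adV (y : ℝ) : Matrix (Fin 2 × Fin 2) (Fin 2) ℂ :=
  fun p i =>
    if p = (0, 0) ∧ i = 0 then 1
    else if p = (1, 0) ∧ i = 1 then ((Real.sqrt (1-y) : ℝ) : ℂ)
    else if p = (0, 1) ∧ i = 1 then ((Real.sqrt y : ℝ) : ℂ)
    else 0

/-- Kraus operators of the amplitude damping channel. -/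
def adK1 (y : ℝ) : Matrix (Fin 2) (Fin 2) ℂ := !![1, 0; 0, ((Real.sqrt (1-y) : ℝ) : ℂ)]
def adK2 (y : ℝ) : Matrix (Fin 2) (Fin 2) ℂ := !![0, ((Real.sqrt y : ℝ) : ℂ); 0, 0]

/-- The amplitude damping channel A_{y,0} in Kraus form. -/
def adCh (y : ℝ) (ρ : Matrix (Fin 2) (Fin 2) ℂ) : Matrix (Fin 2) (Fin 2) ℂ :=
  adK1 y * ρ * (adK1 y)ᴴ + adK2 y * ρ * (adK2 y)ᴴ

lemma sqrt_mul_self_c {a : ℝ} (ha : 0 ≤ a) :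
    ((Real.sqrt a : ℝ) : ℂ) * ((Real.sqrt a : ℝ) : ℂ) = ((a : ℝ) : ℂ) := by
  rw [← Complex.ofReal_mul, Real.mul_self_sqrt ha]

/-- the amplitude damping channel is anti-degradable for y ≥ 1/2. -/
theorem amplitude_damping_antidegradable (y : ℝ) (hy : 1/2 ≤ y) (hy1 : y ≤ 1) :
    ∃ A : Matrix (Fin 2) (Fin 2) ℂ → Matrix (Fin 2) (Fin 2) ℂ,
      IsCPTP A ∧ ∀ ρ, A (chEnv (adV y) ρ) = chOut (adV y) ρ := by
  have hy0 : 0 < y := by linarith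
  obtain ⟨z, hz0, hz1', hzy⟩ : ∃ z : ℝ, 0 ≤ z ∧ 0 ≤ 1 - z ∧ (1 - z) * y = 1 - y := by
    refine ⟨(2*y - 1)/y, div_nonneg (by linarith) hy0.le, ?_, ?_⟩
    · have : (2*y - 1)/y ≤ 1 := by rw [div_le_one hy0]; linarith
      linarith
    · field_simp; ring
  have hsq : Real.sqrt (1 - z) * Real.sqrt y = Real.sqrt (1 - y) := by
    rw [← Real.sqrt_mul hz1', hzy]
  have hsq' : ((Real.sqrt (1-z) : ℝ) : ℂ) * ((Real.sqrt y : ℝ) : ℂ)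
      = ((Real.sqrt (1-y) : ℝ) : ℂ) := by
    rw [← Complex.ofReal_mul, hsq]
  have h1z : ((Real.sqrt (1-z) : ℝ) : ℂ) * ((Real.sqrt (1-z) : ℝ) : ℂ) = 1 - ((z:ℝ) : ℂ) := by
    rw [sqrt_mul_self_c hz1']; push_cast; ring
  have hzz : ((Real.sqrt z : ℝ) : ℂ) * ((Real.sqrt z : ℝ) : ℂ) = ((z : ℝ) : ℂ) :=
    sqrt_mul_self_c hz0
  have hyy : ((Real.sqrt y : ℝ) : ℂ) * ((Real.sqrt y : ℝ) : ℂ) = ((y : ℝ) : ℂ) :=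
    sqrt_mul_self_c hy0.le
  have h1y : ((Real.sqrt (1-y) : ℝ) : ℂ) * ((Real.sqrt (1-y) : ℝ) : ℂ) = 1 - ((y:ℝ) : ℂ) := by
    rw [sqrt_mul_self_c (show (0:ℝ) ≤ 1 - y by linarith)]; push_cast; ring
  have hzyC : ((1:ℂ) - (z:ℝ)) * ((y:ℝ):ℂ) = 1 - ((y:ℝ):ℂ) := by
    have := congrArg (fun t : ℝ => (t : ℂ)) hzy
    push_cast at this
    linear_combination this
  refine ⟨adCh z, ⟨?_, ?_, ?_⟩, ?_⟩
  · constructor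
    · intro ρ σ
      simp [adCh, Matrix.mul_add, Matrix.add_mul]
      abel
    · intro c ρ
      simp only [adCh, Matrix.mul_smul, Matrix.smul_mul, smul_add]
  · -- PSD Choi
    have : choi (adCh z) = (Matrix.of fun (k : Fin 2) (p : Fin 2 × Fin 2) =>
        if k = 0 then (adK1 z) p.2 p.1 else (adK2 z) p.2 p.1)ᴴ *
        (Matrix.of fun (k : Fin 2) (p : Fin 2 × Fin 2) =>
        if k = 0 then (adK1 z) p.2 p.1 else (adK2 z) p.2 p.1) := by
      ext ⟨i, a⟩ ⟨j, b⟩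
      fin_cases i <;> fin_cases j <;> fin_cases a <;> fin_cases b <;>
        (simp only [choi, adCh, Matrix.add_apply, Matrix.mul_apply,
          Matrix.conjTranspose_apply, Fin.sum_univ_two, Matrix.of_apply]
         simp [adK1, adK2, Matrix.single, Complex.conj_ofReal])
    rw [this]
    exact Matrix.posSemidef_conjTranspose_mul_self _
  · intro ρ
    have hK : (adK1 z)ᴴ * adK1 z + (adK2 z)ᴴ * adK2 z = 1 := by
      ext i j
      fin_cases i <;> fin_cases j <;>
        (simp only [Matrix.add_apply, Matrix.mul_apply,
           Matrix.conjTranspose_apply, Fin.sum_univ_two]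
         simp [adK1, adK2, Complex.conj_ofReal, Matrix.one_apply,
           sqrt_mul_self_c hz1', sqrt_mul_self_c hz0])
    calc (adCh z ρ).trace
        = ((adK1 z)ᴴ * adK1 z * ρ).trace + ((adK2 z)ᴴ * adK2 z * ρ).trace := by
          rw [adCh, Matrix.trace_add, Matrix.trace_mul_cycle (adK1 z),
            Matrix.trace_mul_cycle (adK2 z)]
      _ = (((adK1 z)ᴴ * adK1 z + (adK2 z)ᴴ * adK2 z) * ρ).trace := by
          rw [Matrix.add_mul, Matrix.trace_add]
      _ = ρ.trace := by rw [hK, Matrix.one_mul]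
  · intro ρ
    ext i j
    fin_cases i <;> fin_cases j
    · show (adCh z (chEnv (adV y) ρ)) 0 0 = (chOut (adV y) ρ) 0 0
      simp only [adCh, chEnv, chOut, ptraceA, ptraceB, Matrix.add_apply,
        Matrix.mul_apply, Matrix.conjTranspose_apply, Fin.sum_univ_two]
      simp [adK1, adK2, adV, Complex.conj_ofReal, Prod.ext_iff]
      linear_combination (ρ 1 1) * h1y + (ρ 1 1) * ((Real.sqrt y : ℝ):ℂ)^2 * hzz
        + (ρ 1 1) * ((z:ℝ):ℂ) * hyy - (ρ 1 1) * hyy - (ρ 1 1) * hzyC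
    · show (adCh z (chEnv (adV y) ρ)) 0 1 = (chOut (adV y) ρ) 0 1
      simp only [adCh, chEnv, chOut, ptraceA, ptraceB, Matrix.add_apply,
        Matrix.mul_apply, Matrix.conjTranspose_apply, Fin.sum_univ_two]
      simp [adK1, adK2, adV, Complex.conj_ofReal, Prod.ext_iff]
      linear_combination (ρ 0 1) * hsq'
    · show (adCh z (chEnv (adV y) ρ)) 1 0 = (chOut (adV y) ρ) 1 0
      simp only [adCh, chEnv, chOut, ptraceA, ptraceB, Matrix.add_apply,
        Matrix.mul_apply, Matrix.conjTranspose_apply, Fin.sum_univ_two]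
      simp [adK1, adK2, adV, Complex.conj_ofReal, Prod.ext_iff]
      linear_combination (ρ 1 0) * hsq'
    · show (adCh z (chEnv (adV y) ρ)) 1 1 = (chOut (adV y) ρ) 1 1
      simp only [adCh, chEnv, chOut, ptraceA, ptraceB, Matrix.add_apply,
        Matrix.mul_apply, Matrix.conjTranspose_apply, Fin.sum_univ_two]
      simp [adK1, adK2, adV, Complex.conj_ofReal, Prod.ext_iff]
      linear_combination (ρ 1 1) * ((Real.sqrt y : ℝ):ℂ)^2 * h1z
        + (ρ 1 1) * ((1:ℂ) - ((z:ℝ):ℂ)) * hyy + (ρ 1 1) * hzyC - (ρ 1 1) * h1y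

end QI
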